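/- The max-relative entropy satisfies data processing: for any completely positive trace-nonincreasing map N and positive semidefinite ρ, σ, D_max(N(ρ)‖N(σ)) ≤ D_max(ρ‖σ). In fact this holds for any positive map N. -/

import Mathlib

open Matrix BigOperators
open scoped ComplexOrder Classical
noncomputable section
namespace QIT
variable {n m : Type*}

def Dmax [Fintype n] (ρ σ : Matrix n n ℂ) : EReal :=
  sInf ((fun l : ℝ => (l : EReal)) '' {l : ℝ | ((2:ℝ) ^ l • σ - ρ).PosSemidef})

def matLog [Fintype n] [DecidableEq n] (A : Matrix n n ℂ) : Matrix n n ℂ :=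
  if h : A.IsHermitian then
    (h.eigenvectorUnitary : Matrix n n ℂ) *
      Matrix.diagonal (fun i => (Real.log (h.eigenvalues i) : ℂ)) *
      (star (h.eigenvectorUnitary : Matrix n n ℂ))
  else 0

def mpow [Fintype n] [DecidableEq n] (A : Matrix n n ℂ) (p : ℝ) : Matrix n n ℂ :=
  if h : A.IsHermitian then
    (h.eigenvectorUnitary : Matrix n n ℂ) *
      Matrix.diagonal (fun i => ((h.eigenvalues i ^ p : ℝ) : ℂ)) *
      (star (h.eigenvectorUnitary : Matrix n n ℂ))
  else 0

def msqrt [Fintype n] [DecidableEq n] (A : Matrix n n ℂ) : Matrix n n ℂ :=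
  if h : A.PosSemidef then
    (h.1.eigenvectorUnitary : Matrix n n ℂ) *
      Matrix.diagonal (((↑) : ℝ → ℂ) ∘ Real.sqrt ∘ h.1.eigenvalues) *
      (star (h.1.eigenvectorUnitary : Matrix n n ℂ))
  else 0

def SuppLE [Fintype n] (ρ σ : Matrix n n ℂ) : Prop :=
  ∀ v, σ.mulVec v = 0 → ρ.mulVec v = 0

def relEntR [Fintype n] [DecidableEq n] (ρ σ : Matrix n n ℂ) : ℝ :=
  ((ρ * (matLog ρ - matLog σ)).trace).re

def relEnt [Fintype n] [DecidableEq n] (ρ σ : Matrix n n ℂ) : EReal :=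
  if SuppLE ρ σ then ((relEntR ρ σ : ℝ) : EReal) else ⊤

def IsDensity [Fintype n] (ρ : Matrix n n ℂ) : Prop := ρ.PosSemidef ∧ ρ.trace = 1

def matTensorMap {k : Type*} (Φ : Matrix n n ℂ → Matrix m m ℂ)
    (M : Matrix (k × n) (k × n) ℂ) : Matrix (k × m) (k × m) ℂ :=
  fun p q => Φ (fun a b => M (p.1, a) (q.1, b)) p.2 q.2

def matTensorMapLeft {k : Type*} (Φ : Matrix n n ℂ → Matrix m m ℂ)
    (M : Matrix (n × k) (n × k) ℂ) : Matrix (m × k) (m × k) ℂ :=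
  fun p q => Φ (fun a b => M (a, p.2) (b, q.2)) p.1 q.1

def IsCP [Fintype n] [Fintype m] (Φ : Matrix n n ℂ →ₗ[ℂ] Matrix m m ℂ) : Prop :=
  ∀ (k : ℕ) (M : Matrix (Fin k × n) (Fin k × n) ℂ), M.PosSemidef →
    (matTensorMap (⇑Φ) M).PosSemidef

def IsTP [Fintype n] [Fintype m] (Φ : Matrix n n ℂ →ₗ[ℂ] Matrix m m ℂ) : Prop :=
  ∀ M, (Φ M).trace = M.trace

def DmaxChan [Fintype n] [Fintype m] (E F : Matrix n n ℂ →ₗ[ℂ] Matrix m m ℂ) : EReal :=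
  ⨆ φ : {φ : Matrix (n × n) (n × n) ℂ // IsDensity φ},
    Dmax (matTensorMap (⇑E) φ.1) (matTensorMap (⇑F) φ.1)

def DChan [Fintype n] [DecidableEq n] [Fintype m] [DecidableEq m]
    (E F : Matrix n n ℂ →ₗ[ℂ] Matrix m m ℂ) : EReal :=
  ⨆ φ : {φ : Matrix (n × n) (n × n) ℂ // IsDensity φ},
    relEnt (matTensorMap (⇑E) φ.1) (matTensorMap (⇑F) φ.1)

def DAmort [Fintype n] [DecidableEq n] [Fintype m] [DecidableEq m]
    (E F : Matrix n n ℂ →ₗ[ℂ] Matrix m m ℂ) : EReal :=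
  ⨆ r : ℕ, ⨆ φ : {φ : Matrix (Fin r × n) (Fin r × n) ℂ // IsDensity φ},
    ⨆ ω : {ω : Matrix (Fin r × n) (Fin r × n) ℂ // IsDensity ω},
      relEnt (matTensorMap (⇑E) φ.1) (matTensorMap (⇑F) ω.1) - relEnt φ.1 ω.1

def traceNorm [Fintype n] [DecidableEq n] (A : Matrix n n ℂ) : ℝ :=
  ((msqrt (Aᴴ * A)).trace).re

def genFid [Fintype n] [DecidableEq n] (ρ σ : Matrix n n ℂ) : ℝ :=
  (traceNorm (msqrt ρ * msqrt σ) +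
    Real.sqrt ((1 - ρ.trace.re) * (1 - σ.trace.re))) ^ 2

def pdist [Fintype n] [DecidableEq n] (ρ σ : Matrix n n ℂ) : ℝ :=
  Real.sqrt (1 - genFid ρ σ)

def tensorPow [Fintype n] (ρ : Matrix n n ℂ) (k : ℕ) :
    Matrix (Fin k → n) (Fin k → n) ℂ :=
  fun v w => ∏ i, ρ (v i) (w i)

def chanPow [Fintype n] [DecidableEq n] [Fintype m]
    (E : Matrix n n ℂ →ₗ[ℂ] Matrix m m ℂ) (k : ℕ)
    (M : Matrix (Fin k → n) (Fin k → n) ℂ) : Matrix (Fin k → m) (Fin k → m) ℂ :=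
  fun v w => ∑ x : Fin k → n, ∑ y : Fin k → n,
    (∏ i, E (Matrix.single (x i) (y i) 1) (v i) (w i)) * M x y

theorem Dmax_data_processing_general {n m : Type*} [Fintype n] [Fintype m]
    (N : Matrix n n ℂ →ₗ[ℂ] Matrix m m ℂ)
    (hN : ∀ A : Matrix n n ℂ, A.PosSemidef → (N A).PosSemidef)
    (ρ σ : Matrix n n ℂ) :
    Dmax (N ρ) (N σ) ≤ Dmax ρ σ :=
  sInf_le_sInf <| Set.image_mono fun l hl => by
    simpa only [Set.mem_ofPred_eq, map_sub, LinearMap.map_smul_of_tower] using hN _ hl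

/-- **Data processing for the max-relative entropy.**
For any positive linear map `N` (in particular any completely positive
trace-nonincreasing map) and positive semidefinite `ρ, σ`,
`D_max(N(ρ)‖N(σ)) ≤ D_max(ρ‖σ)`. -/
theorem Dmax_data_processing {n m : Type*} [Fintype n] [Fintype m]
    (N : Matrix n n ℂ →ₗ[ℂ] Matrix m m ℂ)
    (hN : ∀ A : Matrix n n ℂ, A.PosSemidef → (N A).PosSemidef)
    (ρ σ : Matrix n n ℂ) (hρ : ρ.PosSemidef) (hσ : σ.PosSemidef) :
    Dmax (N ρ) (N σ) ≤ Dmax ρ σ :=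
  Dmax_data_processing_general N hN ρ σ

end QIT
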